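/- For an ultrametric tree of height T and any t ∈ [0,T], there is a set 𝒞 of independent contrasts with respect to nodes of age > t such that ∑_{C∈𝒞}(T_C − t)² ≥ ¼[(T − t)² + ∑_{i: T_i > t}(T_i − t)²]. -/

import Mathlib

/-- Rooted binary trees; an internal node carries its age
(the distance to any descendant tip in an ultrametric tree). -/
inductive BTree
  | leaf : BTree
  | node (age : ℝ) (l r : BTree) : BTree

namespace BTree

/-- Age of the root of a tree (tips have age `0`). -/
def rootAge : BTree → ℝ
  | leaf => 0
  | node a _ _ => a

/-- Ultrametric consistency: ages strictly decrease from a node to its children. -/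
def validAges : BTree → Prop
  | leaf => True
  | node a l r => rootAge l < a ∧ rootAge r < a ∧ validAges l ∧ validAges r

/-- The subtree at an address (a list of left/right choices), if any. -/
def subtreeAt : BTree → List Bool → Option BTree
  | t, [] => some t
  | leaf, _ :: _ => none
  | node _ l r, b :: p => (if b then r else l).subtreeAt p

/-- Age of the node at a given address (`0` if the address is invalid or a tip). -/
noncomputable def ageAt (t : BTree) (p : List Bool) : ℝ :=
  match t.subtreeAt p with
  | some s => s.rootAge
  | none => 0

/-- Addresses of the tips of a tree. -/
def tips : BTree → Finset (List Bool)
  | leaf => {[]}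
  | node _ l r => l.tips.image (List.cons false) ∪ r.tips.image (List.cons true)

/-- Addresses of the internal nodes of a tree. -/
def internals : BTree → Finset (List Bool)
  | leaf => ∅
  | node _ l r => insert [] (l.internals.image (List.cons false) ∪ r.internals.image (List.cons true))

end BTree

/-- Longest common prefix of two addresses: the address of the most recent
common ancestor of two tips. -/
def lcp : List Bool → List Bool → List Bool
  | a :: p, b :: q => if a = b then a :: lcp p q else []
  | _, _ => []

/-- The set of edges (each edge encoded by the address of the node below it) on
the path joining two tips: all strict prefixes of either tip address that are
strictly longer than the common prefix. -/
def pathEdges (p q : List Bool) : Finset (List Bool) :=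
  ((Finset.range p.length).image (fun k => p.take (k + 1)) ∪
      (Finset.range q.length).image (fun k => q.take (k + 1))).filter
    (fun e => (lcp p q).length < e.length)

/-- `(p, q)` is a contrast of tree `t` with respect to the internal node `i`:
two tips whose most recent common ancestor is `i`. -/
def IsContrast (t : BTree) (i : List Bool) (pq : List Bool × List Bool) : Prop :=
  pq.1 ∈ t.tips ∧ pq.2 ∈ t.tips ∧ lcp pq.1 pq.2 = i


namespace BTree

/-- Tip reached from the root by always descending into the younger child. -/
noncomputable def spine : BTree → List Bool
  | leaf => []
  | node _ l r => if l.rootAge ≤ r.rootAge then false :: spine l else true :: spine r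

noncomputable def cmap (b : Bool) (s : Finset (List Bool × List Bool)) :
    Finset (List Bool × List Bool) :=
  s.image (fun pq => (b :: pq.1, b :: pq.2))

mutual
/-- The set of contrasts produced by the recursive construction. -/
noncomputable def con (t₀ : ℝ) : BTree → Finset (List Bool × List Bool)
  | leaf => ∅
  | node a l r =>
      if t₀ < a then
        insert (false :: spine l, true :: spine r)
          (cmap false (sc t₀ l) ∪ cmap true (sc t₀ r))
      else ∅
/-- Contrasts hanging off the spine. -/
noncomputable def sc (t₀ : ℝ) : BTree → Finset (List Bool × List Bool)
  | leaf => ∅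
  | node _ l r =>
      if l.rootAge ≤ r.rootAge then cmap true (con t₀ r) ∪ cmap false (sc t₀ l)
      else cmap false (con t₀ l) ∪ cmap true (sc t₀ r)
end

end BTree
-- basic lemmas
lemma lcp_cons (b : Bool) (p q : List Bool) : lcp (b :: p) (b :: q) = b :: lcp p q := by
  simp [lcp]

lemma lcp_cons_ne {a b : Bool} (h : a ≠ b) (p q : List Bool) : lcp (a :: p) (b :: q) = [] := by
  simp [lcp, h]

namespace BTree

lemma ageAt_nil (t : BTree) : t.ageAt [] = t.rootAge := by
  cases t <;> simp [ageAt, subtreeAt]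

lemma ageAt_cons (a : ℝ) (l r : BTree) (b : Bool) (p : List Bool) :
    (node a l r).ageAt (b :: p) = (if b then r else l).ageAt p := by
  cases b <;> simp [ageAt, subtreeAt]

lemma mem_tips_node (a : ℝ) (l r : BTree) (b : Bool) (p : List Bool) :
    (b :: p) ∈ (node a l r).tips ↔ p ∈ (if b then r else l).tips := by
  cases b <;> simp [tips]

lemma spine_mem_tips (t : BTree) : t.spine ∈ t.tips := by
  induction t with
  | leaf => simp [spine, tips]
  | node a l r ihl ihr =>
      rw [spine]
      split <;> simp [tips, ihl, ihr]

lemma mem_internals_node (a : ℝ) (l r : BTree) (b : Bool) (i : List Bool) :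
    (b :: i) ∈ (node a l r).internals ↔ i ∈ (if b then r else l).internals := by
  cases b <;> simp [internals]

end BTree

lemma mem_pathEdges {p q e : List Bool} :
    e ∈ pathEdges p q ↔
      ((∃ k < p.length, e = p.take (k + 1)) ∨ (∃ k < q.length, e = q.take (k + 1))) ∧
        (lcp p q).length < e.length := by
  simp [pathEdges, Finset.mem_filter, Finset.mem_union, Finset.mem_image, Finset.mem_range,
    and_comm, eq_comm]
lemma pathEdges_cons (b : Bool) (p q : List Bool) :
    pathEdges (b :: p) (b :: q) = (pathEdges p q).image (List.cons b) := by
  ext e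
  simp only [Finset.mem_image, mem_pathEdges, lcp_cons]
  constructor
  · rintro ⟨hk, hlen⟩
    rcases hk with ⟨k, hk, rfl⟩ | ⟨k, hk, rfl⟩
    · cases k with
      | zero => simp at hlen
      | succ k =>
          refine ⟨p.take (k + 1), ⟨Or.inl ⟨k, by simpa using hk, rfl⟩, ?_⟩, by simp⟩
          simpa using hlen
    · cases k with
      | zero => simp at hlen
      | succ k =>
          refine ⟨q.take (k + 1), ⟨Or.inr ⟨k, by simpa using hk, rfl⟩, ?_⟩, by simp⟩
          simpa using hlen
  · rintro ⟨e', ⟨hk, hlen⟩, rfl⟩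
    refine ⟨?_, by simpa using hlen⟩
    rcases hk with ⟨k, hk, rfl⟩ | ⟨k, hk, rfl⟩
    · exact Or.inl ⟨k + 1, by simp; omega, by simp⟩
    · exact Or.inr ⟨k + 1, by simp; omega, by simp⟩

lemma take_succ_mem_iff {p e : List Bool} :
    (∃ k < p.length, e = p.take (k + 1)) ↔ e ≠ [] ∧ e <+: p := by
  constructor
  · rintro ⟨k, hk, rfl⟩
    refine ⟨?_, List.take_prefix _ _⟩
    have : (p.take (k + 1)).length = k + 1 := by simp; omega
    intro h; rw [h] at this; simp at this
  · rintro ⟨hne, hpre⟩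
    have hlen : 1 ≤ e.length := by
      cases e with | nil => simp at hne | cons a l => simp
    have hle : e.length ≤ p.length := hpre.length_le
    refine ⟨e.length - 1, by omega, ?_⟩
    rw [Nat.sub_add_cancel hlen]
    exact List.prefix_iff_eq_take.mp hpre

lemma mem_pathEdges_ne_head {a b : Bool} (h : a ≠ b) {p q e : List Bool} :
    e ∈ pathEdges (a :: p) (b :: q) ↔
      (∃ e', e' <+: p ∧ e = a :: e') ∨ (∃ e', e' <+: q ∧ e = b :: e') := by
  rw [mem_pathEdges, lcp_cons_ne h]
  simp only [take_succ_mem_iff, List.length_nil]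
  constructor
  · rintro ⟨⟨hne, hpre⟩ | ⟨hne, hpre⟩, hlen⟩
    · cases e with
      | nil => simp at hne
      | cons c e' =>
          rcases (List.cons_prefix_cons.mp hpre) with ⟨rfl, h2⟩
          exact Or.inl ⟨e', h2, rfl⟩
    · cases e with
      | nil => simp at hne
      | cons c e' =>
          rcases (List.cons_prefix_cons.mp hpre) with ⟨rfl, h2⟩
          exact Or.inr ⟨e', h2, rfl⟩
  · rintro (⟨e', hpre, rfl⟩ | ⟨e', hpre, rfl⟩)
    · exact ⟨Or.inl ⟨by simp, List.cons_prefix_cons.mpr ⟨rfl, hpre⟩⟩, by simp⟩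
    · exact ⟨Or.inr ⟨by simp, List.cons_prefix_cons.mpr ⟨rfl, hpre⟩⟩, by simp⟩

namespace BTree

lemma mem_cmap {b : Bool} {s : Finset (List Bool × List Bool)} {pq : List Bool × List Bool} :
    pq ∈ cmap b s ↔ ∃ p q, (p, q) ∈ s ∧ pq = (b :: p, b :: q) := by
  constructor
  · intro h
    rcases Finset.mem_image.mp h with ⟨⟨p, q⟩, hm, rfl⟩
    exact ⟨p, q, hm, rfl⟩
  · rintro ⟨p, q, hm, rfl⟩
    exact Finset.mem_image.mpr ⟨(p, q), hm, rfl⟩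

lemma cmap_inj (b : Bool) : Function.Injective
    (fun pq : List Bool × List Bool => ((b :: pq.1, b :: pq.2) : List Bool × List Bool)) := by
  rintro ⟨p, q⟩ ⟨p', q'⟩ h
  simp only [Prod.mk.injEq, List.cons.injEq] at h
  simp [h.1.2, h.2.2]

/-- heads differ ⇒ path edge sets disjoint -/
lemma disjoint_pe_ne_head {b b' : Bool} (hbb : b ≠ b')
    {X Y : Finset (List Bool × List Bool)} {pq pq' : List Bool × List Bool}
    (h : pq ∈ cmap b X) (h' : pq' ∈ cmap b' Y) :
    Disjoint (pathEdges pq.1 pq.2) (pathEdges pq'.1 pq'.2) := by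
  rcases mem_cmap.mp h with ⟨p, q, _, rfl⟩
  rcases mem_cmap.mp h' with ⟨p', q', _, rfl⟩
  rw [Finset.disjoint_left]
  intro e he he'
  simp only [pathEdges_cons, Finset.mem_image] at he he'
  rcases he with ⟨e1, _, rfl⟩
  rcases he' with ⟨e2, _, heq⟩
  injection heq with h1 h2
  exact hbb h1.symm

/-- pairwise path-disjointness is preserved by `cmap`. -/
lemma disjoint_pe_cmap {b : Bool} {X : Finset (List Bool × List Bool)}
    (hX : ∀ pq ∈ X, ∀ pq' ∈ X, pq ≠ pq' →
      Disjoint (pathEdges pq.1 pq.2) (pathEdges pq'.1 pq'.2))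
    {pq pq' : List Bool × List Bool} (h : pq ∈ cmap b X) (h' : pq' ∈ cmap b X)
    (hne : pq ≠ pq') :
    Disjoint (pathEdges pq.1 pq.2) (pathEdges pq'.1 pq'.2) := by
  rcases mem_cmap.mp h with ⟨p, q, hm, rfl⟩
  rcases mem_cmap.mp h' with ⟨p', q', hm', rfl⟩
  have hne2 : (p, q) ≠ (p', q') := by
    rintro h; apply hne; rw [Prod.mk.injEq] at h ⊢; simp [h.1, h.2]
  have := hX _ hm _ hm' hne2
  simp only [pathEdges_cons]
  exact (Finset.disjoint_image (List.cons_injective)).mpr this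

end BTree
namespace BTree

def PDisj (S : Finset (List Bool × List Bool)) : Prop :=
  ∀ pq ∈ S, ∀ pq' ∈ S, pq ≠ pq' →
    Disjoint (pathEdges pq.1 pq.2) (pathEdges pq'.1 pq'.2)

def Avoid (S : Finset (List Bool × List Bool)) (s : List Bool) : Prop :=
  ∀ pq ∈ S, ∀ e ∈ pathEdges pq.1 pq.2, ¬ e <+: s

lemma avoid_cmap {X : Finset (List Bool × List Bool)} {s : List Bool} {b : Bool}
    (hav : Avoid X s) : Avoid (cmap b X) (b :: s) := by
  rintro pq h e he hpre
  rcases mem_cmap.mp h with ⟨p, q, hm, rfl⟩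
  simp only [pathEdges_cons, Finset.mem_image] at he
  rcases he with ⟨d, hd, rfl⟩
  rcases List.cons_prefix_cons.mp hpre with ⟨-, hpre2⟩
  exact hav _ hm d hd hpre2

lemma avoid_cmap_ne {Y : Finset (List Bool × List Bool)} {s : List Bool} {b b' : Bool}
    (hbb : b ≠ b') : Avoid (cmap b' Y) (b :: s) := by
  rintro pq h e he hpre
  rcases mem_cmap.mp h with ⟨p, q, hm, rfl⟩
  simp only [pathEdges_cons, Finset.mem_image] at he
  rcases he with ⟨d, hd, rfl⟩
  exact hbb ((List.cons_prefix_cons.mp hpre).1).symm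

lemma avoid_union {X Y : Finset (List Bool × List Bool)} {s : List Bool}
    (hX : Avoid X s) (hY : Avoid Y s) : Avoid (X ∪ Y) s := by
  intro pq h
  rcases Finset.mem_union.mp h with h | h
  · exact hX _ h
  · exact hY _ h

lemma pdisj_union_ne_head {b b' : Bool} (hbb : b ≠ b')
    {X Y : Finset (List Bool × List Bool)}
    (hX : PDisj X) (hY : PDisj Y) : PDisj (cmap b X ∪ cmap b' Y) := by
  intro pq h pq' h' hne
  rcases Finset.mem_union.mp h with h | h <;> rcases Finset.mem_union.mp h' with h' | h'
  · exact disjoint_pe_cmap hX h h' hne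
  · exact disjoint_pe_ne_head hbb h h'
  · exact disjoint_pe_ne_head hbb.symm h h'
  · exact disjoint_pe_cmap hY h h' hne

/-- edges of the root contrast avoid edges of contrasts that avoid the spine. -/
lemma disjoint_root_cmap {b : Bool} {sl sr : List Bool}
    {X : Finset (List Bool × List Bool)}
    (hav : Avoid X (if b then sr else sl)) :
    ∀ pq ∈ cmap b X,
      Disjoint (pathEdges (false :: sl) (true :: sr)) (pathEdges pq.1 pq.2) := by
  intro pq h
  rcases mem_cmap.mp h with ⟨p, q, hm, rfl⟩
  rw [Finset.disjoint_left]
  intro e he he'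
  simp only [pathEdges_cons, Finset.mem_image] at he'
  rcases he' with ⟨d, hd, rfl⟩
  have hchar := (mem_pathEdges_ne_head (by simp : (false : Bool) ≠ true)).mp he
  cases b
  · rcases hchar with ⟨e', hpre, heq⟩ | ⟨e', hpre, heq⟩
    · injection heq with h1 h2; subst h2
      exact hav _ hm d hd (by simpa using hpre)
    · exact (by simp at heq : False)
  · rcases hchar with ⟨e', hpre, heq⟩ | ⟨e', hpre, heq⟩
    · exact (by simp at heq : False)
    · injection heq with h1 h2; subst h2
      exact hav _ hm d hd (by simpa using hpre)

lemma sc_branch {t₀ : ℝ} {b : Bool} {c y : BTree}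
    (hcon : PDisj (con t₀ c)) (hsc1 : PDisj (sc t₀ y)) (hsc2 : Avoid (sc t₀ y) y.spine) :
    PDisj (cmap (!b) (con t₀ c) ∪ cmap b (sc t₀ y)) ∧
      Avoid (cmap (!b) (con t₀ c) ∪ cmap b (sc t₀ y)) (b :: y.spine) := by
  refine ⟨pdisj_union_ne_head (by simp) hcon hsc1, ?_⟩
  exact avoid_union (avoid_cmap_ne (by simp)) (avoid_cmap hsc2)

theorem disj_main (t₀ : ℝ) (t : BTree) :
    PDisj (con t₀ t) ∧ PDisj (sc t₀ t) ∧ Avoid (sc t₀ t) t.spine := by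
  induction t with
  | leaf =>
      refine ⟨?_, ?_, ?_⟩ <;> intro pq h <;> simp [con, sc] at h
  | node a l r ihl ihr =>
      obtain ⟨ihlc, ihls, ihla⟩ := ihl
      obtain ⟨ihrc, ihrs, ihra⟩ := ihr
      constructor
      · -- con
        rw [con]
        split
        · intro pq h pq' h' hne
          rw [Finset.mem_insert] at h h'
          rcases h with rfl | h <;> rcases h' with rfl | h'
          · exact absurd rfl hne
          · rcases Finset.mem_union.mp h' with h' | h'
            · exact disjoint_root_cmap (b := false) (by simpa using ihla) _ h'
            · exact disjoint_root_cmap (b := true) (by simpa using ihra) _ h'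
          · rcases Finset.mem_union.mp h with h | h
            · exact (disjoint_root_cmap (b := false) (by simpa using ihla) _ h).symm
            · exact (disjoint_root_cmap (b := true) (by simpa using ihra) _ h).symm
          · exact pdisj_union_ne_head (by simp) ihls ihrs _ h _ h' hne
        · intro pq h; simp at h
      · -- sc
        rw [spine, sc]
        split
        · exact sc_branch (b := false) ihrc ihls ihla
        · exact sc_branch (b := true) ihlc ihrs ihra

end BTree
namespace BTree

def GoodSet (t₀ : ℝ) (t : BTree) (S : Finset (List Bool × List Bool)) : Prop :=
  ∀ pq ∈ S, ∃ i ∈ t.internals, t₀ < t.ageAt i ∧ IsContrast t i pq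

lemma good_cmap {t₀ : ℝ} {a : ℝ} {l r : BTree} {b : Bool}
    {X : Finset (List Bool × List Bool)} (hX : GoodSet t₀ (if b then r else l) X) :
    GoodSet t₀ (node a l r) (cmap b X) := by
  intro pq h
  rcases mem_cmap.mp h with ⟨p, q, hm, rfl⟩
  rcases hX _ hm with ⟨i, hi, hage, h1, h2, h3⟩
  refine ⟨b :: i, (mem_internals_node a l r b i).mpr hi, ?_, ?_, ?_, ?_⟩
  · rwa [ageAt_cons]
  · exact (mem_tips_node a l r b p).mpr h1
  · exact (mem_tips_node a l r b q).mpr h2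
  · simp only [lcp_cons]; rw [h3]

lemma good_union {t₀ : ℝ} {t : BTree} {X Y : Finset (List Bool × List Bool)}
    (hX : GoodSet t₀ t X) (hY : GoodSet t₀ t Y) : GoodSet t₀ t (X ∪ Y) := by
  intro pq h
  rcases Finset.mem_union.mp h with h | h
  · exact hX _ h
  · exact hY _ h

theorem valid_main (t₀ : ℝ) (t : BTree) :
    GoodSet t₀ t (con t₀ t) ∧ GoodSet t₀ t (sc t₀ t) := by
  induction t with
  | leaf => constructor <;> intro pq h <;> simp [con, sc] at h
  | node a l r ihl ihr =>
      constructor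
      · rw [con]
        split
        · rename_i ha
          intro pq h
          rcases Finset.mem_insert.mp h with rfl | h
          · refine ⟨[], Finset.mem_insert_self _ _, by rwa [ageAt_nil], ?_, ?_, ?_⟩
            · exact (mem_tips_node a l r false l.spine).mpr (by simpa using l.spine_mem_tips)
            · exact (mem_tips_node a l r true r.spine).mpr (by simpa using r.spine_mem_tips)
            · exact lcp_cons_ne (by simp) _ _
          · exact good_union (good_cmap (by simpa using ihl.2))
              (good_cmap (by simpa using ihr.2)) _ h
        · intro pq h; simp at h
      · rw [sc]
        split
        · exact good_union (good_cmap (by simpa using ihr.1)) (good_cmap (by simpa using ihl.2))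
        · exact good_union (good_cmap (by simpa using ihl.1)) (good_cmap (by simpa using ihr.2))

end BTree
namespace BTree

noncomputable def pos (t₀ x : ℝ) : ℝ := if t₀ < x then (x - t₀) ^ 2 else 0

lemma pos_nonneg (t₀ x : ℝ) : 0 ≤ pos t₀ x := by
  unfold pos; split
  · positivity
  · exact le_refl 0

lemma pos_mono {t₀ x y : ℝ} (h : x ≤ y) : pos t₀ x ≤ pos t₀ y := by
  unfold pos
  split
  · rw [if_pos (by linarith)]
    have h1 : (0:ℝ) ≤ x - t₀ := by linarith
    have h2 : x - t₀ ≤ y - t₀ := by linarith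
    exact pow_le_pow_left₀ h1 h2 2
  · rw [← pos]; exact pos_nonneg t₀ y

noncomputable def Ssum (t₀ : ℝ) (t : BTree) : ℝ :=
  ∑ i ∈ t.internals.filter (fun i => t₀ < t.ageAt i), (t.ageAt i - t₀) ^ 2

noncomputable def Vsum (t₀ : ℝ) (t : BTree) : ℝ :=
  ∑ pq ∈ con t₀ t, (t.ageAt (lcp pq.1 pq.2) - t₀) ^ 2

noncomputable def Wsum (t₀ : ℝ) (t : BTree) : ℝ :=
  ∑ pq ∈ sc t₀ t, (t.ageAt (lcp pq.1 pq.2) - t₀) ^ 2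

lemma sum_internals_node (a : ℝ) (l r : BTree) (g : List Bool → ℝ) :
    ∑ i ∈ (node a l r).internals, g i =
      g [] + ((∑ i ∈ l.internals, g (false :: i)) + ∑ i ∈ r.internals, g (true :: i)) := by
  rw [internals, Finset.sum_insert, Finset.sum_union, Finset.sum_image, Finset.sum_image]
  · intro x _ y _ h; injection h
  · intro x _ y _ h; injection h
  · rw [Finset.disjoint_left]
    rintro e he he'
    rcases Finset.mem_image.mp he with ⟨x, _, rfl⟩
    rcases Finset.mem_image.mp he' with ⟨y, _, h⟩
    simp at h
  · simp

lemma Ssum_node (t₀ a : ℝ) (l r : BTree) :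
    Ssum t₀ (node a l r) = pos t₀ a + (Ssum t₀ l + Ssum t₀ r) := by
  unfold Ssum
  rw [Finset.sum_filter, Finset.sum_filter, Finset.sum_filter,
    sum_internals_node a l r (fun i => if t₀ < (node a l r).ageAt i then ((node a l r).ageAt i - t₀) ^ 2 else 0)]
  have h0 : (if t₀ < (node a l r).ageAt [] then ((node a l r).ageAt [] - t₀) ^ 2 else 0)
      = pos t₀ a := by simp [ageAt_nil, pos, rootAge]
  have h1 : ∑ i ∈ l.internals,
      (if t₀ < (node a l r).ageAt (false :: i) then ((node a l r).ageAt (false :: i) - t₀) ^ 2 else 0)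
      = ∑ i ∈ l.internals, (if t₀ < l.ageAt i then (l.ageAt i - t₀) ^ 2 else 0) :=
    Finset.sum_congr rfl fun i _ => by simp [ageAt_cons]
  have h2 : ∑ i ∈ r.internals,
      (if t₀ < (node a l r).ageAt (true :: i) then ((node a l r).ageAt (true :: i) - t₀) ^ 2 else 0)
      = ∑ i ∈ r.internals, (if t₀ < r.ageAt i then (r.ageAt i - t₀) ^ 2 else 0) :=
    Finset.sum_congr rfl fun i _ => by simp [ageAt_cons]
  rw [h0, h1, h2]

lemma sum_val_cmap (t₀ a : ℝ) (l r : BTree) (b : Bool) (X : Finset (List Bool × List Bool)) :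
    ∑ pq ∈ cmap b X, ((node a l r).ageAt (lcp pq.1 pq.2) - t₀) ^ 2 =
      ∑ pq ∈ X, ((if b then r else l).ageAt (lcp pq.1 pq.2) - t₀) ^ 2 := by
  unfold cmap
  rw [Finset.sum_image (fun x _ y _ h => cmap_inj b h)]
  exact Finset.sum_congr rfl fun pq _ => by rw [lcp_cons, ageAt_cons]

lemma Vsum_node_pos (t₀ a : ℝ) (l r : BTree) (ha : t₀ < a) :
    Vsum t₀ (node a l r) = (a - t₀) ^ 2 + (Wsum t₀ l + Wsum t₀ r) := by
  unfold Vsum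
  rw [con]
  rw [if_pos ha, Finset.sum_insert, Finset.sum_union]
  · rw [lcp_cons_ne (by simp), ageAt_nil, rootAge]
    rw [sum_val_cmap t₀ a l r false, sum_val_cmap t₀ a l r true]
    rfl
  · rw [Finset.disjoint_left]
    rintro pq h h'
    rcases mem_cmap.mp h with ⟨p, q, _, rfl⟩
    rcases mem_cmap.mp h' with ⟨p', q', _, heq⟩
    rw [Prod.mk.injEq] at heq
    simp at heq
  · intro h
    rcases Finset.mem_union.mp h with h | h <;>
      rcases mem_cmap.mp h with ⟨p, q, _, heq⟩ <;> rw [Prod.mk.injEq] at heq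
    · simp at heq
    · simp at heq

lemma Vsum_node_neg (t₀ a : ℝ) (l r : BTree) (ha : ¬ t₀ < a) :
    Vsum t₀ (node a l r) = 0 := by
  unfold Vsum
  rw [con, if_neg ha, Finset.sum_empty]

lemma Wsum_node (t₀ a : ℝ) (l r : BTree) :
    Wsum t₀ (node a l r) =
      if l.rootAge ≤ r.rootAge then Vsum t₀ r + Wsum t₀ l else Vsum t₀ l + Wsum t₀ r := by
  unfold Wsum
  rw [sc]
  split
  · rw [Finset.sum_union, sum_val_cmap t₀ a l r true, sum_val_cmap t₀ a l r false]
    · rfl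
    · rw [Finset.disjoint_left]
      rintro pq h h'
      rcases mem_cmap.mp h with ⟨p, q, _, rfl⟩
      rcases mem_cmap.mp h' with ⟨p', q', _, heq⟩
      rw [Prod.mk.injEq] at heq
      simp at heq
  · rw [Finset.sum_union, sum_val_cmap t₀ a l r false, sum_val_cmap t₀ a l r true]
    · rfl
    · rw [Finset.disjoint_left]
      rintro pq h h'
      rcases mem_cmap.mp h with ⟨p, q, _, rfl⟩
      rcases mem_cmap.mp h' with ⟨p', q', _, heq⟩
      rw [Prod.mk.injEq] at heq
      simp at heq

lemma Vsum_nonneg (t₀ : ℝ) (t : BTree) : 0 ≤ Vsum t₀ t :=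
  Finset.sum_nonneg fun _ _ => by positivity

lemma Wsum_nonneg (t₀ : ℝ) (t : BTree) : 0 ≤ Wsum t₀ t :=
  Finset.sum_nonneg fun _ _ => by positivity

lemma Ssum_zero {t₀ : ℝ} {t : BTree} (hval : t.validAges) (h : t.rootAge ≤ t₀) :
    Ssum t₀ t = 0 := by
  induction t with
  | leaf => simp [Ssum, internals]
  | node a l r ihl ihr =>
      obtain ⟨hl, hr, vl, vr⟩ := hval
      simp only [rootAge] at h
      rw [Ssum_node, ihl vl (by simp only [rootAge] at hl ⊢; linarith), ihr vr (by linarith),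
        pos, if_neg (by linarith)]
      ring

theorem PQ_main (t₀ : ℝ) (ht₀ : 0 ≤ t₀) (t : BTree) (hval : t.validAges) :
    (pos t₀ t.rootAge + Ssum t₀ t ≤ 4 * Vsum t₀ t) ∧
      (Ssum t₀ t ≤ 4 * Wsum t₀ t + pos t₀ t.rootAge) := by
  induction t with
  | leaf =>
      have : pos t₀ (0:ℝ) = 0 := by rw [pos, if_neg (by linarith)]
      constructor
      · simp [Ssum, internals, Vsum, con, rootAge, this]
      · simp [Ssum, internals, Wsum, sc, rootAge, this]
  | node a l r ihl ihr =>
      obtain ⟨hl, hr, vl, vr⟩ := hval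
      obtain ⟨Pl, Ql⟩ := ihl vl
      obtain ⟨Pr, Qr⟩ := ihr vr
      have posla : pos t₀ l.rootAge ≤ pos t₀ a := pos_mono (le_of_lt hl)
      have posra : pos t₀ r.rootAge ≤ pos t₀ a := pos_mono (le_of_lt hr)
      constructor
      · simp only [rootAge]; rw [Ssum_node]
        by_cases ha : t₀ < a
        · rw [Vsum_node_pos t₀ a l r ha]
          have hpa : pos t₀ a = (a - t₀) ^ 2 := if_pos ha
          linarith
        · rw [Vsum_node_neg t₀ a l r ha]
          have hS : Ssum t₀ (node a l r) = 0 :=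
            Ssum_zero ⟨hl, hr, vl, vr⟩ (by simp only [rootAge]; linarith)
          rw [Ssum_node] at hS
          have : pos t₀ a = 0 := if_neg ha
          linarith
      · simp only [rootAge]; rw [Ssum_node, Wsum_node]
        split
        · rename_i hyo
          have : pos t₀ l.rootAge ≤ pos t₀ r.rootAge := pos_mono hyo
          linarith
        · rename_i hyo
          have : pos t₀ r.rootAge ≤ pos t₀ l.rootAge := pos_mono (by linarith)
          linarith

end BTree
/-- in an ultrametric binary tree of height `T`, for any `t₀ ∈ [0, T]` there
is a set of pairwise path-disjoint contrasts with respect to internal nodes of age `> t₀`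
with `∑_C (T_C - t₀)² ≥ ((T - t₀)² + ∑_{i : T_i > t₀} (T_i - t₀)²) / 4`. -/
theorem contrasts_squared_age_bound (t : BTree) (hval : t.validAges) (T : ℝ)
    (hT : T = t.rootAge) (t₀ : ℝ) (ht₀ : 0 ≤ t₀) (ht₀T : t₀ ≤ T) :
    ∃ C : Finset (List Bool × List Bool),
      (∀ pq ∈ C, ∃ i ∈ t.internals, t₀ < t.ageAt i ∧ IsContrast t i pq) ∧
      (∀ pq ∈ C, ∀ pq' ∈ C, pq ≠ pq' →
        Disjoint (pathEdges pq.1 pq.2) (pathEdges pq'.1 pq'.2)) ∧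
      (T - t₀) ^ 2 +
          ∑ i ∈ t.internals.filter (fun i => t₀ < t.ageAt i), (t.ageAt i - t₀) ^ 2 ≤
        4 * ∑ pq ∈ C, (t.ageAt (lcp pq.1 pq.2) - t₀) ^ 2 := by
  refine ⟨BTree.con t₀ t, (BTree.valid_main t₀ t).1, (BTree.disj_main t₀ t).1, ?_⟩
  have hP := (BTree.PQ_main t₀ ht₀ t hval).1
  have hpos : (T - t₀) ^ 2 = BTree.pos t₀ t.rootAge := by
    rcases lt_or_eq_of_le ht₀T with h | h
    · rw [BTree.pos, if_pos (hT ▸ h), hT]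
    · rw [BTree.pos]
      split
      · rw [hT]
      · rw [← h, sub_self]; ring
  rw [hpos]
  exact hP
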